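/- arXiv:2512.09766 — 2 statements merged into one kernel-verified Lean document; each statement's English description precedes it below -/
import Mathlib

section
/- Let q be a primitive n-th root of unity and f ∈ k[t] such that n does not divide j+1 for every j with nonzero coefficient c_j of f. Then u^n and v^n are central in B_q(f). -/
noncomputable section

open FreeAlgebra Polynomial

/-- The defining relations of the algebra `B_q(f)`:
`uv = q·vu`, `wu = q·uw + f(v)`, `wv = q⁻¹·vw + f(u)`,
where `u, v, w` are the generators `ι 0, ι 1, ι 2` of the free algebra. -/
inductive BRel (k : Type*) [Field k] (q : k) (f : Polynomial k) :
    FreeAlgebra k (Fin 3) → FreeAlgebra k (Fin 3) → Prop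
  | uv : BRel k q f (ι k 0 * ι k 1) (q • (ι k 1 * ι k 0))
  | wu : BRel k q f (ι k 2 * ι k 0) (q • (ι k 0 * ι k 2) + aeval (ι k 1) f)
  | wv : BRel k q f (ι k 2 * ι k 1) (q⁻¹ • (ι k 1 * ι k 2) + aeval (ι k 0) f)

/-- The algebra `B_q(f)`. -/
abbrev BAlg (k : Type*) [Field k] (q : k) (f : Polynomial k) := RingQuot (BRel k q f)

def Bu (k : Type*) [Field k] (q : k) (f : Polynomial k) : BAlg k q f :=
  RingQuot.mkAlgHom k (BRel k q f) (ι k 0)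
def Bv (k : Type*) [Field k] (q : k) (f : Polynomial k) : BAlg k q f :=
  RingQuot.mkAlgHom k (BRel k q f) (ι k 1)
def Bw (k : Type*) [Field k] (q : k) (f : Polynomial k) : BAlg k q f :=
  RingQuot.mkAlgHom k (BRel k q f) (ι k 2)

/-!
Pushing `W` through `U^m` with `WU = r UW + f(V)` gives
`W U^m = r^m U^m W + ∑_{i<m} r^i U^i f(V) U^{m-1-i}`. Since `VU = r⁻¹ UV`, for `m = n` a monomial
`V^j` of `f(V)` contributes `(∑_{i<n} r^i (r^{-j})^{n-1-i}) U^{n-1} V^j`. Now `r` and `r^{-j}` are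
`n`-th roots of unity which differ exactly when `n ∤ j + 1`, so this two-variable geometric sum
vanishes and `W` commutes with `U^n`; so does `V`, as `r^n = 1`. Both `(U, V) = (u, v)` with
`r = q` and `(U, V) = (v, u)` with `r = q⁻¹` satisfy these relations.
-/

open Finset

theorem IsPrimitiveRoot.geom_sum₂_inv_pow_eq_zero {K : Type*} [Field K] {r : K} {n j : ℕ}
    (hr : IsPrimitiveRoot r n) (hj : ¬ n ∣ j + 1) :
    ∑ i ∈ range n, r ^ i * (r⁻¹ ^ j) ^ (n - 1 - i) = 0 := by
  rcases eq_or_ne n 0 with rfl | hn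
  · simp
  have hne : r ≠ r⁻¹ ^ j := by
    intro h
    apply hj
    rw [← hr.pow_eq_one_iff_dvd, pow_succ]
    nth_rw 2 [h]
    rw [← mul_pow, mul_inv_cancel₀ (hr.ne_zero hn), one_pow]
  rw [geom₂_sum hne, ← pow_mul, mul_comm, pow_mul, inv_pow, hr.pow_eq_one]
  simp

section TwistedCommutation

variable {k A : Type*} [CommSemiring k] [Semiring A] [Algebra k A] {U V W X : A} {c r : k}

theorem mul_pow_eq_smul_of_mul_eq_smul (h : V * U = c • (U * V)) (l : ℕ) :
    V * U ^ l = c ^ l • (U ^ l * V) := by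
  induction l with
  | zero => simp
  | succ l ih =>
    rw [pow_succ, ← mul_assoc, ih, smul_mul_assoc, mul_assoc, h, mul_smul_comm, smul_smul,
      ← pow_succ, mul_assoc]

theorem pow_mul_pow_eq_smul_of_mul_eq_smul (h : V * U = c • (U * V)) (j l : ℕ) :
    V ^ j * U ^ l = (c ^ j) ^ l • (U ^ l * V ^ j) := by
  induction j with
  | zero => simp
  | succ j ih =>
    rw [pow_succ, mul_assoc, mul_pow_eq_smul_of_mul_eq_smul h, mul_smul_comm, ← mul_assoc, ih,
      smul_mul_assoc, smul_smul, ← mul_pow, mul_assoc, ← pow_succ', ← pow_succ]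

theorem mul_pow_eq_smul_add_sum_of_mul_eq_smul_add (h : W * U = r • (U * W) + X) (m : ℕ) :
    W * U ^ m = r ^ m • (U ^ m * W) + ∑ i ∈ range m, r ^ i • (U ^ i * X * U ^ (m - 1 - i)) := by
  induction m with
  | zero => simp
  | succ m ih =>
    have hshift : ∀ i ∈ range m, r ^ i • (U ^ i * X * U ^ (m - 1 - i)) * U =
        r ^ i • (U ^ i * X * U ^ (m + 1 - 1 - i)) := by
      intro i hi
      rw [smul_mul_assoc, mul_assoc, ← pow_succ,
        show m - 1 - i + 1 = m + 1 - 1 - i by simp only [mem_range] at hi; omega]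
    rw [pow_succ, ← mul_assoc, ih, add_mul, sum_mul, sum_congr rfl hshift, sum_range_succ,
      smul_mul_assoc, mul_assoc, h, mul_add, smul_add, mul_smul_comm, smul_smul, ← pow_succ,
      ← mul_assoc, ← pow_succ, Nat.add_sub_cancel, Nat.sub_self, pow_zero, mul_one]
    abel

theorem sum_smul_pow_mul_pow_mul_pow_of_mul_eq_smul (h : V * U = c • (U * V)) (n j : ℕ) :
    ∑ i ∈ range n, r ^ i • (U ^ i * V ^ j * U ^ (n - 1 - i)) =
      (∑ i ∈ range n, r ^ i * (c ^ j) ^ (n - 1 - i)) • (U ^ (n - 1) * V ^ j) := by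
  rw [sum_smul]
  refine sum_congr rfl fun i hi => ?_
  rw [mul_assoc, pow_mul_pow_eq_smul_of_mul_eq_smul h, mul_smul_comm, ← mul_assoc, ← pow_add,
    Nat.add_sub_cancel' (by simp only [mem_range] at hi; omega), smul_smul]

end TwistedCommutation

section RootOfUnity

variable {k A : Type*} [Field k] [Semiring A] [Algebra k A] {U V W : A} {r : k} {n : ℕ}
  {f : k[X]}

theorem sum_smul_pow_mul_aeval_mul_pow_eq_zero (h : V * U = r⁻¹ • (U * V))
    (hr : IsPrimitiveRoot r n) (hf : ∀ j ∈ f.support, ¬ n ∣ j + 1) :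
    ∑ i ∈ range n, r ^ i • (U ^ i * aeval V f * U ^ (n - 1 - i)) = 0 := by
  have hmonomial (j : ℕ) (hj : j ∈ f.support) :
      ∑ i ∈ range n, r ^ i • (U ^ i * V ^ j * U ^ (n - 1 - i)) = 0 := by
    rw [sum_smul_pow_mul_pow_mul_pow_of_mul_eq_smul h, hr.geom_sum₂_inv_pow_eq_zero (hf j hj),
      zero_smul]
  calc ∑ i ∈ range n, r ^ i • (U ^ i * aeval V f * U ^ (n - 1 - i))
      = ∑ j ∈ f.support,
          f.coeff j • ∑ i ∈ range n, r ^ i • (U ^ i * V ^ j * U ^ (n - 1 - i)) := by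
        simp only [aeval_def, eval₂_eq_sum, Polynomial.sum_def, ← Algebra.smul_def, mul_sum,
          sum_mul, smul_sum, mul_smul_comm, smul_mul_assoc, smul_comm (r ^ _)]
        exact sum_comm
    _ = 0 := sum_eq_zero fun j hj => by rw [hmonomial j hj, smul_zero]

theorem commute_pow_of_mul_eq_inv_smul (h : V * U = r⁻¹ • (U * V)) (hr : IsPrimitiveRoot r n) :
    Commute V (U ^ n) := by
  rw [commute_iff_eq, mul_pow_eq_smul_of_mul_eq_smul h, inv_pow, hr.pow_eq_one, inv_one, one_smul]

theorem commute_pow_of_mul_eq_smul_add_aeval (hVU : V * U = r⁻¹ • (U * V))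
    (hWU : W * U = r • (U * W) + aeval V f) (hr : IsPrimitiveRoot r n)
    (hf : ∀ j ∈ f.support, ¬ n ∣ j + 1) :
    Commute W (U ^ n) := by
  rw [commute_iff_eq, mul_pow_eq_smul_add_sum_of_mul_eq_smul_add hWU,
    sum_smul_pow_mul_aeval_mul_pow_eq_zero hVU hr hf, add_zero, hr.pow_eq_one, one_smul]

end RootOfUnity

theorem mem_center_of_forall_commute_ι {R X A : Type*} [CommSemiring R] [Semiring A]
    [Algebra R A] (φ : FreeAlgebra R X →ₐ[R] A) (hφ : Function.Surjective φ) {z : A}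
    (hz : ∀ x, Commute (φ (ι R x)) z) :
    z ∈ Set.center A := by
  rw [Semigroup.mem_center_iff]
  intro a
  obtain ⟨a, rfl⟩ := hφ a
  induction a using FreeAlgebra.induction with
  | grade0 c => rw [AlgHom.commutes]; exact Algebra.commutes c z
  | grade1 x => exact hz x
  | mul a b ha hb => rw [map_mul]; exact Commute.mul_left ha hb
  | add a b ha hb => rw [map_add]; exact Commute.add_left ha hb

section BAlg

variable {k : Type*} [Field k] {q : k} {f : k[X]}

theorem mem_center_BAlg_of_commute {z : BAlg k q f} (hu : Commute (Bu k q f) z)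
    (hv : Commute (Bv k q f) z) (hw : Commute (Bw k q f) z) :
    z ∈ Set.center (BAlg k q f) :=
  mem_center_of_forall_commute_ι _ (RingQuot.mkAlgHom_surjective k _) fun
    | 0 => hu
    | 1 => hv
    | 2 => hw

theorem Bu_mul_Bv : Bu k q f * Bv k q f = q • (Bv k q f * Bu k q f) := by
  simpa only [Bu, Bv, map_mul, map_smul]
    using RingQuot.mkAlgHom_rel k (BRel.uv (q := q) (f := f))

theorem Bw_mul_Bu :
    Bw k q f * Bu k q f = q • (Bu k q f * Bw k q f) + aeval (Bv k q f) f := by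
  simpa only [Bu, Bv, Bw, map_mul, map_smul, map_add, aeval_algHom_apply]
    using RingQuot.mkAlgHom_rel k (BRel.wu (q := q) (f := f))

theorem Bw_mul_Bv :
    Bw k q f * Bv k q f = q⁻¹ • (Bv k q f * Bw k q f) + aeval (Bu k q f) f := by
  simpa only [Bu, Bv, Bw, map_mul, map_smul, map_add, aeval_algHom_apply]
    using RingQuot.mkAlgHom_rel k (BRel.wv (q := q) (f := f))

end BAlg

theorem stmt4_general (k : Type*) [Field k]
    (q : k) (hq0 : q ≠ 0) (n : ℕ) (hq : IsPrimitiveRoot q n)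
    (f : Polynomial k) (hf : ∀ j ∈ f.support, ¬ n ∣ (j + 1)) :
    (Bu k q f) ^ n ∈ Set.center (BAlg k q f) ∧
      (Bv k q f) ^ n ∈ Set.center (BAlg k q f) := by
  have hvu : Bv k q f * Bu k q f = q⁻¹ • (Bu k q f * Bv k q f) := by
    rw [Bu_mul_Bv, smul_smul, inv_mul_cancel₀ hq0, one_smul]
  have huv : Bu k q f * Bv k q f = q⁻¹⁻¹ • (Bv k q f * Bu k q f) := by
    rw [inv_inv, Bu_mul_Bv]
  constructor
  · exact mem_center_BAlg_of_commute ((Commute.refl _).pow_right n)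
      (commute_pow_of_mul_eq_inv_smul hvu hq)
      (commute_pow_of_mul_eq_smul_add_aeval hvu Bw_mul_Bu hq hf)
  · exact mem_center_BAlg_of_commute (commute_pow_of_mul_eq_inv_smul huv hq.inv)
      ((Commute.refl _).pow_right n)
      (commute_pow_of_mul_eq_smul_add_aeval huv Bw_mul_Bv hq.inv hf)

/-- if `q` is a primitive `n`-th root of unity and `n ∤ j+1` for
every `j` in the support of `f`, then `u^n` and `v^n` are central in `B_q(f)`. -/
theorem stmt4 (k : Type*) [Field k] [IsAlgClosed k] [CharZero k]
    (q : k) (hq0 : q ≠ 0) (n : ℕ) (hq : IsPrimitiveRoot q n)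
    (f : Polynomial k) (hf : ∀ j ∈ f.support, ¬ n ∣ (j + 1)) :
    (Bu k q f) ^ n ∈ Set.center (BAlg k q f) ∧
      (Bv k q f) ^ n ∈ Set.center (BAlg k q f) :=
  stmt4_general k q hq0 n hq f hf
end
end

section
/- Let d ≥ 2 and q ≠ ±1. If a diagonal map φ(u) = au, φ(v) = ξav, φ(w) = ξ^{-1}a^{d-1}w (with a ∈ k^×, ξ^{d+1} = 1) is a reflection of B_q(t^d), i.e., (1−t)^2 divides the polynomial p(t) = (1−at)(1−ξat)(1−ξ^{-1}a^{d-1}t^{d-1}), then a = ξ = 1 and φ is the identity. -/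
open Polynomial

/-- for `d ≥ 2` and `q ≠ ±1`, if the diagonal automorphism
`φ_{a,ξ}` of `B_q(t^d)` (with `a ∈ k^×`, `ξ^{d+1} = 1`) is a reflection, i.e.
`(1-t)^2` divides `p(t) = (1-at)(1-ξat)(1-ξ⁻¹a^{d-1}t^{d-1})`, then
`a = ξ = 1`, so `φ` is the identity. -/
theorem stmt18 (k : Type*) [Field k] [IsAlgClosed k] [CharZero k]
    (q : k) (hq0 : q ≠ 0) (hq1 : q ≠ 1) (hq2 : q ≠ -1)
    (d : ℕ) (hd : 2 ≤ d) (a ξ : k) (ha : a ≠ 0) (hξ : ξ ^ (d + 1) = 1)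
    (hrefl : (1 - X) ^ 2 ∣
      ((1 - C a * X) * (1 - C (ξ * a) * X) *
        (1 - C (ξ⁻¹ * a ^ (d - 1)) * X ^ (d - 1)))) :
    a = 1 ∧ ξ = 1 := by
  -- Helper: if `ξ*a = 1` and `ξ⁻¹*a^(d-1) = 1` then `ξ^d = 1`, hence `ξ = 1`, `a = 1`.
  have keyB : ξ * a = 1 → ξ⁻¹ * a ^ (d - 1) = 1 → a = 1 ∧ ξ = 1 := by
    intro h2 h3
    have haξ : a = ξ⁻¹ := eq_inv_of_mul_eq_one_right h2
    have hinv : ξ⁻¹ ^ d = 1 := by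
      rw [haξ] at h3
      rw [show d = 1 + (d - 1) by omega, pow_add, pow_one]
      exact h3
    have hξd : ξ ^ d = 1 := by rwa [inv_pow, inv_eq_one] at hinv
    have hξ1 : ξ = 1 := by rw [pow_succ, hξd, one_mul] at hξ; exact hξ
    exact ⟨by rw [haξ, hξ1, inv_one], hξ1⟩
  obtain ⟨r, hr⟩ := hrefl
  have h0 := congrArg (eval 1) hr
  have h1 := congrArg (eval 1 ∘ derivative) hr
  simp [derivative_mul, derivative_pow] at h0 h1
  rcases h0 with (h|h)|h
  · -- a = 1
    have ha1 : a = 1 := (sub_eq_zero.mp h).symm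
    subst ha1
    simp at h1
    refine ⟨rfl, ?_⟩
    rcases h1 with h1 | h1
    · exact sub_eq_zero.mp h1
    · have : ξ⁻¹ = 1 := (sub_eq_zero.mp h1).symm
      rwa [inv_eq_one] at this
  · -- ξ * a = 1
    have h2 : ξ * a = 1 := (sub_eq_zero.mp h).symm
    rw [h] at h1
    simp [h2] at h1
    rcases h1 with h1 | h1
    · have ha1 : a = 1 := sub_eq_zero.mp h1
      rw [ha1, mul_one] at h2
      exact ⟨ha1, h2⟩
    · exact keyB h2 (sub_eq_zero.mp h1).symm
  · -- ξ⁻¹ * a^(d-1) = 1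
    have h3 : ξ⁻¹ * a ^ (d - 1) = 1 := (sub_eq_zero.mp h).symm
    rw [h] at h1
    simp [h3] at h1
    rcases h1 with (h1 | h1) | h1
    · have ha1 : a = 1 := (sub_eq_zero.mp h1).symm
      refine ⟨ha1, ?_⟩
      rw [ha1, one_pow, mul_one] at h3
      rwa [inv_eq_one] at h3
    · exact keyB (sub_eq_zero.mp h1).symm h3
    · omega
end
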